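/- Let S be the n×n matrix with S_{u,v} = (f[u] − f[v])² for a signal f ∈ ℝⁿ, C = n·I − J, and x ∈ {−1,1}ⁿ with parts X, X̄. Then xᵀ C S C x = −8·( |X|·Σ_{v∈X̄} f[v] − |X̄|·Σ_{u∈X} f[u] )². -/

import Mathlib

/-!
Writing `y = C x`, the symmetry of `C` turns the left side into `yᵀ S y`, and `C` kills constants,
so `∑ y = 0`. Expanding `(f u − f v)² = f u² − 2 f u f v + f v²`, the two square terms then vanish
and `yᵀ S y = −2 (∑ y v f v)²`. Finally `∑ y v f v = n ∑ x f − (∑ x)(∑ f) = 2 |X̄| ∑_X f − 2 |X| ∑_X̄ f`.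
-/

open Matrix Finset

variable {ι : Type*}

theorem transpose_smul_one_sub_of_const [DecidableEq ι] (c : ℝ) :
    (c • (1 : Matrix ι ι ℝ) - of fun _ _ => 1)ᵀ = c • 1 - of fun _ _ => 1 := by
  rw [transpose_sub, transpose_smul, transpose_one]
  rfl

variable [Fintype ι]

theorem dotProduct_mul_mul_mulVec_of_transpose_eq {R : Type*} [CommSemiring R]
    {C : Matrix ι ι R} (hC : Cᵀ = C) (S : Matrix ι ι R) (x : ι → R) :
    x ⬝ᵥ (C * S * C) *ᵥ x = (C *ᵥ x) ⬝ᵥ S *ᵥ (C *ᵥ x) := by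
  rw [mul_assoc, ← mulVec_mulVec, dotProduct_mulVec, ← mulVec_transpose, hC, ← mulVec_mulVec]

theorem dotProduct_mulVec_sq_sub_of_sum_eq_zero {S : Matrix ι ι ℝ} {f : ι → ℝ}
    (hS : ∀ u v, S u v = (f u - f v) ^ 2) {y : ι → ℝ} (hy : ∑ v, y v = 0) :
    y ⬝ᵥ S *ᵥ y = -2 * (∑ v, y v * f v) ^ 2 := by
  have hexpand : y ⬝ᵥ S *ᵥ y =
      (∑ u, y u * f u ^ 2) * (∑ v, y v) + (∑ u, y u) * (∑ v, y v * f v ^ 2)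
        - 2 * ((∑ u, y u * f u) * (∑ v, y v * f v)) := by
    rw [sum_mul_sum, sum_mul_sum, sum_mul_sum]
    simp only [dotProduct, mulVec, hS, mul_sum]
    rw [← sum_add_distrib, ← sum_sub_distrib]
    refine sum_congr rfl fun u _ => ?_
    rw [← sum_add_distrib, ← sum_sub_distrib]
    exact sum_congr rfl fun v _ => by ring
  rw [hexpand, hy]
  ring

section Centering

variable [DecidableEq ι]

theorem smul_one_sub_of_const_mulVec (c : ℝ) (x : ι → ℝ) (v : ι) :
    ((c • (1 : Matrix ι ι ℝ) - of fun _ _ => 1) *ᵥ x) v = c * x v - ∑ u, x u := by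
  rw [sub_mulVec, smul_mulVec, one_mulVec]
  simp [mulVec, dotProduct]

theorem sum_card_smul_one_sub_of_const_mulVec (x : ι → ℝ) :
    ∑ v, (((Fintype.card ι : ℝ) • (1 : Matrix ι ι ℝ) - of fun _ _ => 1) *ᵥ x) v = 0 := by
  simp [smul_one_sub_of_const_mulVec, sum_sub_distrib, ← mul_sum]

end Centering

section SignVector

variable {x : ι → ℝ} (hx : ∀ v, x v = 1 ∨ x v = -1)
include hx

theorem sum_eq_sum_filter_eq_one_add_sum_filter_eq_neg_one (g : ι → ℝ) :
    ∑ v, g v = ∑ v ∈ univ.filter (x · = 1), g v + ∑ v ∈ univ.filter (x · = -1), g v := by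
  have hcompl : univ.filter (x · = -1) = univ.filter (¬x · = 1) := by
    ext v
    rcases hx v with h | h <;> norm_num [h]
  rw [hcompl, sum_filter_add_sum_filter_not]

theorem sum_mul_eq_sum_filter_eq_one_sub_sum_filter_eq_neg_one (g : ι → ℝ) :
    ∑ v, x v * g v = ∑ v ∈ univ.filter (x · = 1), g v - ∑ v ∈ univ.filter (x · = -1), g v := by
  have hpos : ∑ v ∈ univ.filter (x · = 1), x v * g v = ∑ v ∈ univ.filter (x · = 1), g v :=
    sum_congr rfl fun v hv => by rw [(mem_filter.mp hv).2, one_mul]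
  have hneg : ∑ v ∈ univ.filter (x · = -1), x v * g v = -∑ v ∈ univ.filter (x · = -1), g v := by
    rw [← sum_neg_distrib]
    exact sum_congr rfl fun v hv => by rw [(mem_filter.mp hv).2, neg_one_mul]
  rw [sum_eq_sum_filter_eq_one_add_sum_filter_eq_neg_one hx, hpos, hneg, sub_eq_add_neg]

theorem sum_card_smul_one_sub_of_const_mulVec_mul [DecidableEq ι] (f : ι → ℝ) :
    ∑ v, (((Fintype.card ι : ℝ) • (1 : Matrix ι ι ℝ) - of fun _ _ => 1) *ᵥ x) v * f v =
      2 * (#(univ.filter (x · = -1)) : ℝ) * ∑ v ∈ univ.filter (x · = 1), f v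
        - 2 * (#(univ.filter (x · = 1)) : ℝ) * ∑ v ∈ univ.filter (x · = -1), f v := by
  have hcard := sum_eq_sum_filter_eq_one_add_sum_filter_eq_neg_one hx fun _ => 1
  have hsum := sum_mul_eq_sum_filter_eq_one_sub_sum_filter_eq_neg_one hx fun _ => 1
  simp only [sum_const, card_univ, nsmul_eq_mul, mul_one] at hcard hsum
  simp only [smul_one_sub_of_const_mulVec, sub_mul, sum_sub_distrib, mul_assoc,
    ← mul_sum]
  rw [sum_mul_eq_sum_filter_eq_one_sub_sum_filter_eq_neg_one hx,
    sum_eq_sum_filter_eq_one_add_sum_filter_eq_neg_one hx f, hsum, hcard]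
  ring

end SignVector

/-- For the signal matrix `S` with `S u v = (f u − f v)²`, `C = n•I − J`, and a
`±1` cut indicator `x` with parts `X`, `X̄`:
`xᵀ C S C x = −8 (|X| ∑_{v∈X̄} f v − |X̄| ∑_{u∈X} f u)²`. -/
theorem stmt_14 (n : ℕ) (f : Fin n → ℝ)
    (S : Matrix (Fin n) (Fin n) ℝ) (hS : ∀ u v, S u v = (f u - f v) ^ 2)
    (C : Matrix (Fin n) (Fin n) ℝ)
    (hC : C = (n : ℝ) • 1 - Matrix.of fun _ _ => (1 : ℝ))
    (x : Fin n → ℝ) (hx : ∀ v, x v = 1 ∨ x v = -1) :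
    x ⬝ᵥ (C * S * C).mulVec x =
      -8 * (((Finset.univ.filter fun v : Fin n => x v = 1).card : ℝ) *
              (∑ v ∈ Finset.univ.filter (fun v : Fin n => x v = -1), f v)
            - ((Finset.univ.filter fun v : Fin n => x v = -1).card : ℝ) *
              (∑ u ∈ Finset.univ.filter (fun u : Fin n => x u = 1), f u)) ^ 2 := by
  have hCn : C = (Fintype.card (Fin n) : ℝ) • 1 - of fun _ _ => 1 := by rw [hC, Fintype.card_fin]
  have hCsymm : Cᵀ = C := hCn ▸ transpose_smul_one_sub_of_const _
  have hsum : ∑ v, (C *ᵥ x) v = 0 := hCn ▸ sum_card_smul_one_sub_of_const_mulVec x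
  rw [dotProduct_mul_mul_mulVec_of_transpose_eq hCsymm,
    dotProduct_mulVec_sq_sub_of_sum_eq_zero hS hsum, hCn,
    sum_card_smul_one_sub_of_const_mulVec_mul hx]
  ring
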